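/- arXiv:2309.13766 — 8 statements merged into one kernel-verified Lean document; each statement's English description precedes it below -/
import Mathlib

section
/- There exist an instance of the threshold reserve model (with two patients, two categories, and one vaccine reserved per category) such that no matching simultaneously complies with eligibility requirements, is maximal in beneficiary assignment, and is maximal in resource allocation. Consequently, no mechanism satisfying universal domain can be both maximal in beneficiary assignment and maximal in resource allocation. -/
open scoped Classical

variable {ι κ : Type*} [Fintype ι] [Fintype κ]

/-- Number of patients matched to category `c` under matching `μ`. -/
noncomputable def matchCount (μ : ι → Option κ) (c : κ) : ℕ :=
  (Finset.univ.filter fun i => μ i = some c).card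

/-- Number of matched patients under `μ`. -/
noncomputable def matchedCard (μ : ι → Option κ) : ℕ :=
  (Finset.univ.filter fun i => μ i ≠ none).card

/-- Number of patients matched to a category of which they are a beneficiary. -/
noncomputable def benefCard (B : κ → Finset ι) (μ : ι → Option κ) : ℕ :=
  (Finset.univ.filter fun i => ∃ c, μ i = some c ∧ i ∈ B c).card

/-- `μ` respects the capacity (reserve) of every category. -/
def Caps (r : κ → ℕ) (μ : ι → Option κ) : Prop :=
  ∀ c, matchCount μ c ≤ r c

/-- `μ` complies with eligibility requirements. -/
def Complies (E : κ → Finset ι) (μ : ι → Option κ) : Prop :=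
  ∀ i c, μ i = some c → i ∈ E c

/-- `μ` is a feasible eligibility-complying matching. -/
def Valid (r : κ → ℕ) (E : κ → Finset ι) (μ : ι → Option κ) : Prop :=
  Caps r μ ∧ Complies E μ

/-- `μ` is maximal in resource allocation. -/
def MaxRes (r : κ → ℕ) (E : κ → Finset ι) (μ : ι → Option κ) : Prop :=
  Valid r E μ ∧ ∀ μ', Valid r E μ' → matchedCard μ' ≤ matchedCard μ

/-- `μ` is max-in-max: maximal in resource allocation and maximizing beneficiary
assignments among such matchings. -/
def MaxInMax (r : κ → ℕ) (E B : κ → Finset ι) (μ : ι → Option κ) : Prop :=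
  MaxRes r E μ ∧ ∀ μ', MaxRes r E μ' → benefCard B μ' ≤ benefCard B μ
/-- `μ` is maximal in beneficiary assignment. -/
def MaxBenef (r : κ → ℕ) (E B : κ → Finset ι) (μ : ι → Option κ) : Prop :=
  Valid r E μ ∧ ∀ μ', Valid r E μ' → benefCard B μ' ≤ benefCard B μ

/-! In the counterexample patient `0` is eligible for both categories and is the only
beneficiary of category `0`, while patient `1` is eligible only for category `0`. Matching both
patients forces `1 ↦ 0` and hence `0 ↦ 1`, which creates no beneficiary; but `0 ↦ 0` alone
creates one. So no matching is maximal for both criteria. -/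

section

variable {I C : Type*} [Fintype I]

theorem matchedCard_eq_card_iff {μ : I → Option C} :
    matchedCard μ = Fintype.card I ↔ ∀ i, μ i ≠ none := by
  simp [matchedCard, ← Finset.card_univ, Finset.card_filter_eq_iff]

theorem matchedCard_le_card (μ : I → Option C) : matchedCard μ ≤ Fintype.card I :=
  Finset.card_filter_le _ _

theorem benefCard_pos_iff {B : C → Finset I} {μ : I → Option C} :
    0 < benefCard B μ ↔ ∃ i c, μ i = some c ∧ i ∈ B c := by
  simp [benefCard, Finset.card_pos, Finset.filter_nonempty_iff]

theorem caps_one_of_injective {μ : I → Option C} (hμ : Function.Injective μ) :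
    Caps (fun _ => 1) μ := fun _ =>
  Finset.card_le_one.2 fun _ hi _ hj =>
    hμ ((Finset.mem_filter.1 hi).2.trans (Finset.mem_filter.1 hj).2.symm)

theorem Caps.eq_of_eq_some {r : C → ℕ} {μ : I → Option C} (h : Caps r μ) {c : C}
    (hc : r c ≤ 1) {i j : I} (hi : μ i = some c) (hj : μ j = some c) : i = j :=
  Finset.card_le_one.1 ((h c).trans hc) i (by simp [hi]) j (by simp [hj])

theorem MaxRes.ne_none_of_valid {r : C → ℕ} {E : C → Finset I} {μ μ' : I → Option C}
    (hμ : MaxRes r E μ) (hμ' : Valid r E μ') (hall : ∀ i, μ' i ≠ none) (i : I) :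
    μ i ≠ none :=
  matchedCard_eq_card_iff.1 ((matchedCard_le_card μ).antisymm
    ((matchedCard_eq_card_iff.2 hall).symm.le.trans (hμ.2 μ' hμ'))) i

theorem MaxBenef.exists_benef_of_valid {r : C → ℕ} {E B : C → Finset I}
    {μ μ' : I → Option C} (hμ : MaxBenef r E B μ) (hμ' : Valid r E μ') {i : I} {c : C}
    (hi : μ' i = some c) (hc : i ∈ B c) : ∃ j c, μ j = some c ∧ j ∈ B c :=
  benefCard_pos_iff.1 ((benefCard_pos_iff.2 ⟨i, c, hi, hc⟩).trans_le (hμ.2 μ' hμ'))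

end

def exampleElig : Fin 2 → Finset (Fin 2) := ![{0, 1}, {0}]

def exampleBenef : Fin 2 → Finset (Fin 2) := ![{0}, ∅]

theorem exampleBenef_subset_exampleElig (c : Fin 2) : exampleBenef c ⊆ exampleElig c := by
  fin_cases c <;> decide

theorem not_exists_maxBenef_maxRes_example :
    ¬ ∃ μ : Fin 2 → Option (Fin 2),
      Valid (fun _ => 1) exampleElig μ ∧
      MaxBenef (fun _ => 1) exampleElig exampleBenef μ ∧ MaxRes (fun _ => 1) exampleElig μ := by
  rintro ⟨μ, -, hB, hR⟩
  have hfull : Valid (fun _ => 1) exampleElig ![some 1, some 0] :=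
    ⟨caps_one_of_injective (by decide), by unfold Complies; decide⟩
  have hserve : Valid (fun _ => 1) exampleElig ![some 0, none] :=
    ⟨caps_one_of_injective (by decide), by unfold Complies; decide⟩
  obtain ⟨c₀, h₀⟩ := Option.ne_none_iff_exists'.1 (hR.ne_none_of_valid hfull (by decide) 0)
  obtain ⟨c₁, h₁⟩ := Option.ne_none_iff_exists'.1 (hR.ne_none_of_valid hfull (by decide) 1)
  have hc₁ : c₁ = 0 := by
    have := hR.1.2 1 c₁ h₁
    fin_cases c₁ <;> simp_all [exampleElig]
  have hc₀ : c₀ = 1 := by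
    have hne : c₀ ≠ 0 := by
      rintro rfl
      exact absurd (hR.1.1.eq_of_eq_some le_rfl h₀ (hc₁ ▸ h₁)) (by decide)
    omega
  obtain ⟨j, c, hj, hjc⟩ := hB.exists_benef_of_valid hserve (i := 0) (c := 0) rfl (by decide)
  fin_cases j <;> fin_cases c <;> simp_all [exampleBenef]

/-- Impossibility: there is an instance of the threshold reserve model with two patients,
two categories and one vaccine reserved per category in which no eligibility-complying
matching is both maximal in beneficiary assignment and maximal in resource allocation;
consequently, no mechanism (defined on all such instances, i.e. satisfying universal
domain) can always output a matching that is both. -/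
theorem impossibility :
    (∃ E B : Fin 2 → Finset (Fin 2),
      (∀ c, B c ⊆ E c) ∧
      ¬ ∃ μ : Fin 2 → Option (Fin 2),
          Valid (fun _ => 1) E μ ∧
          MaxBenef (fun _ => 1) E B μ ∧ MaxRes (fun _ => 1) E μ) ∧
    (∀ M : (Fin 2 → Finset (Fin 2)) → (Fin 2 → Finset (Fin 2)) → (Fin 2 → Option (Fin 2)),
      ¬ ∀ E B : Fin 2 → Finset (Fin 2), (∀ c, B c ⊆ E c) →
          Valid (fun _ => 1) E (M E B) ∧
          MaxBenef (fun _ => 1) E B (M E B) ∧ MaxRes (fun _ => 1) E (M E B)) :=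
  ⟨⟨exampleElig, exampleBenef, exampleBenef_subset_exampleElig,
      not_exists_maxBenef_maxRes_example⟩,
    fun M hM => not_exists_maxBenef_maxRes_example
      ⟨M exampleElig exampleBenef, hM _ _ exampleBenef_subset_exampleElig⟩⟩
end

section
/- In the threshold reserve model, a matching that complies with eligibility requirements is Pareto optimal if and only if it is maximal in resource allocation. That is, a matching μ is not Pareto dominated by any eligibility-complying matching if and only if μ matches the maximum possible number of patients among all eligibility-complying matchings. -/
open scoped Classical

variable {ι κ : Type*} [Fintype ι] [Fintype κ]

/-- A matching `μ'` Pareto dominates `μ`. -/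
def Dominates (μ μ' : ι → Option κ) : Prop :=
  (∀ i, μ' i = none → μ i = none) ∧ ∃ i, μ i = none ∧ μ' i ≠ none

/-!
Pareto dominance is strict inclusion of the sets of matched patients, so a matching of maximum
size is Pareto optimal. Conversely, let `μ'` be valid and larger than `μ`. While some patient `i`
matched by `μ` to `c` is unmatched by `μ'`, give `i` a seat in `c` under `μ'`, evicting a patient
whom `μ'` but not `μ` puts in `c` if `c` is full. This keeps `μ'` valid and no smaller, and
strictly shrinks the set of patients matched by `μ` whom `μ'` treats differently. The final `μ'`
matches everyone `μ` matches and more, so it dominates `μ`: this is augmentation in a transversal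
matroid.
-/

open Finset Function

section Exchange

omit [Fintype κ]

variable {r : κ → ℕ} {E : κ → Finset ι}

noncomputable def matchedSet (μ : ι → Option κ) : Finset ι :=
  univ.filter fun i => μ i ≠ none

noncomputable def reassigned (μ μ' : ι → Option κ) : Finset ι :=
  univ.filter fun i => μ i ≠ none ∧ μ' i ≠ μ i

@[simp]
lemma mem_matchedSet {μ : ι → Option κ} {i : ι} : i ∈ matchedSet μ ↔ μ i ≠ none := by
  simp [matchedSet]

@[simp]
lemma mem_reassigned {μ μ' : ι → Option κ} {i : ι} :
    i ∈ reassigned μ μ' ↔ μ i ≠ none ∧ μ' i ≠ μ i := by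
  simp [reassigned]

lemma matchedCard_eq_card_matchedSet (μ : ι → Option κ) :
    matchedCard μ = #(matchedSet μ) := rfl

lemma dominates_iff_matchedSet_ssubset {μ μ' : ι → Option κ} :
    Dominates μ μ' ↔ matchedSet μ ⊂ matchedSet μ' := by
  simp only [Dominates, ssubset_iff_subset_ne, Ne, Finset.ext_iff, subset_iff, mem_matchedSet]
  grind

lemma matchCount_comp_perm (μ : ι → Option κ) (σ : Equiv.Perm ι) (c : κ) :
    matchCount (μ ∘ σ) c = matchCount μ c :=
  card_equiv σ (by simp)

lemma matchedCard_comp_perm (μ : ι → Option κ) (σ : Equiv.Perm ι) :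
    matchedCard (μ ∘ σ) = matchedCard μ :=
  card_equiv σ (by simp)

lemma matchCount_update_self_le (μ : ι → Option κ) (i : ι) (c : κ) :
    matchCount (update μ i (some c)) c ≤ matchCount μ c + 1 := by
  refine (card_le_card fun k hk => ?_).trans (card_insert_le i _)
  by_cases k = i <;> simp_all

lemma matchCount_update_of_ne (μ : ι → Option κ) (i : ι) {c c' : κ} (hc : c' ≠ c) :
    matchCount (update μ i (some c)) c' ≤ matchCount μ c' := by
  refine card_le_card fun k hk => ?_
  by_cases k = i <;> simp_all

lemma matchedSet_subset_update (μ : ι → Option κ) (i : ι) (c : κ) :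
    matchedSet μ ⊆ matchedSet (update μ i (some c)) := fun k hk => by
  by_cases k = i <;> simp_all

lemma exists_matched_of_matchCount_le {μ μ' : ι → Option κ} {i : ι} {c : κ}
    (hi : μ i = some c) (hi' : μ' i ≠ some c) (hle : matchCount μ c ≤ matchCount μ' c) :
    ∃ j, μ' j = some c ∧ μ j ≠ some c := by
  by_contra! h
  have hssub : univ.filter (fun k => μ' k = some c) ⊂ univ.filter (fun k => μ k = some c) :=
    (ssubset_iff_of_subset fun k hk => by simp_all).2 ⟨i, by simp [hi], by simp [hi']⟩
  exact (card_lt_card hssub).not_ge hle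

lemma Valid.update_of_lt {μ : ι → Option κ} (hμ : Valid r E μ) {i : ι} {c : κ}
    (hE : i ∈ E c) (hroom : matchCount μ c < r c) : Valid r E (update μ i (some c)) := by
  refine ⟨fun c' => ?_, fun k c' hk => ?_⟩
  · rcases eq_or_ne c' c with rfl | hc
    · exact (matchCount_update_self_le μ i c').trans hroom
    · exact (matchCount_update_of_ne μ i hc).trans (hμ.1 c')
  · by_cases hki : k = i
    · simp_all
    · exact hμ.2 k c' (by simpa [hki] using hk)

lemma Valid.comp_swap {μ : ι → Option κ} (hμ : Valid r E μ) {i j : ι} {c : κ}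
    (hE : i ∈ E c) (hi : μ i = none) (hj : μ j = some c) :
    Valid r E (μ ∘ Equiv.swap i j) := by
  refine ⟨fun c' => (matchCount_comp_perm μ _ c').trans_le (hμ.1 c'), fun k c' hk => ?_⟩
  simp only [comp_apply, Equiv.swap_apply_def] at hk
  split_ifs at hk with hki hkj
  · simp_all
  · simp_all
  · exact hμ.2 k c' hk

lemma reassigned_ssubset {μ μ' ν : ι → Option κ} {i : ι} (hi : i ∈ reassigned μ μ')
    (hνi : ν i = μ i) (hν : ∀ k, ν k ≠ μ k → μ' k ≠ μ k) :
    reassigned μ ν ⊂ reassigned μ μ' :=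
  (ssubset_iff_of_subset fun k hk => by simp_all).2 ⟨i, hi, by simp [hνi]⟩

lemma exists_valid_reassigned_ssubset {μ μ' : ι → Option κ} (hμ : Valid r E μ)
    (hμ' : Valid r E μ') {i : ι} {c : κ} (hi : μ i = some c) (hi' : μ' i = none) :
    ∃ ν, Valid r E ν ∧ reassigned μ ν ⊂ reassigned μ μ' ∧ matchedCard μ' ≤ matchedCard ν := by
  have hmem : i ∈ reassigned μ μ' := by simp [hi, hi']
  by_cases hroom : matchCount μ' c < r c
  · refine ⟨update μ' i (some c), hμ'.update_of_lt (hμ.2 i c hi) hroom,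
      reassigned_ssubset hmem (by simp [hi]) fun k hk => ?_,
      card_le_card (matchedSet_subset_update μ' i c)⟩
    by_cases k = i <;> simp_all
  · -- `c` is full under `μ'`, so it seats some `j` that `μ` does not put there; `j` yields to `i`.
    obtain ⟨j, hj', hj⟩ := exists_matched_of_matchCount_le hi (by simp [hi'])
      ((hμ.1 c).trans (not_lt.1 hroom))
    refine ⟨μ' ∘ Equiv.swap i j, hμ'.comp_swap (hμ.2 i c hi) hi' hj',
      reassigned_ssubset hmem (by simp [hj', hi]) fun k hk => ?_,
      (matchedCard_comp_perm μ' _).ge⟩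
    simp only [comp_apply, Equiv.swap_apply_def] at hk
    split_ifs at hk with hki hkj
    · simp_all
    · simp_all [Ne.symm hj]
    · exact hk

lemma exists_valid_matchedSet_subset {μ μ' : ι → Option κ} (hμ : Valid r E μ)
    (hμ' : Valid r E μ') :
    ∃ ν, Valid r E ν ∧ matchedSet μ ⊆ matchedSet ν ∧ matchedCard μ' ≤ matchedCard ν := by
  induction hn : #(reassigned μ μ') using Nat.strong_induction_on generalizing μ' with
  | _ n ih =>
  by_cases hsub : matchedSet μ ⊆ matchedSet μ'
  · exact ⟨μ', hμ', hsub, le_rfl⟩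
  obtain ⟨i, hi, hi'⟩ := not_subset.1 hsub
  obtain ⟨c, hc⟩ := Option.ne_none_iff_exists'.1 (mem_matchedSet.1 hi)
  obtain ⟨ν, hν, hssub, hle⟩ := exists_valid_reassigned_ssubset hμ hμ' hc (by simpa using hi')
  obtain ⟨ν', hν', hsub', hle'⟩ := ih _ (hn ▸ card_lt_card hssub) hν rfl
  exact ⟨ν', hν', hsub', hle.trans hle'⟩

lemma exists_dominates_of_matchedCard_lt {μ μ' : ι → Option κ} (hμ : Valid r E μ)
    (hμ' : Valid r E μ') (hlt : matchedCard μ < matchedCard μ') :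
    ∃ ν, Valid r E ν ∧ Dominates μ ν := by
  obtain ⟨ν, hν, hsub, hle⟩ := exists_valid_matchedSet_subset hμ hμ'
  refine ⟨ν, hν, dominates_iff_matchedSet_ssubset.2 (hsub.ssubset_of_ne ?_)⟩
  rintro heq
  rw [matchedCard_eq_card_matchedSet, matchedCard_eq_card_matchedSet, heq] at hlt
  exact hlt.not_ge hle

end Exchange

/-- In the threshold reserve model, an eligibility-complying matching is Pareto optimal
iff it is maximal in resource allocation. -/
theorem pareto_iff_maxRes (r : κ → ℕ) (E : κ → Finset ι) (μ : ι → Option κ)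
    (hμ : Valid r E μ) :
    (¬ ∃ μ', Valid r E μ' ∧ Dominates μ μ') ↔
      (∀ μ', Valid r E μ' → matchedCard μ' ≤ matchedCard μ) := by
  refine ⟨fun hpareto μ' hμ' => ?_, fun hmax ⟨μ', hμ', hdom⟩ => ?_⟩
  · by_contra! hlt
    exact hpareto (exists_dominates_of_matchedCard_lt hμ hμ' hlt)
  · exact (card_lt_card (dominates_iff_matchedSet_ssubset.1 hdom)).not_ge (hmax μ' hμ')
end

section
/- Dulmage–Mendelsohn-type lemma: given a bipartite compatibility relation between patients and vaccine units and two compatible matchings μ1 and μ2, there exists a compatible matching μ3 that matches every patient who is matched under μ1 and saturates every vaccine unit that is used under μ2. -/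
/-- A set of pairwise vertex-disjoint edges in a bipartite graph between `X` and `Y`. -/
def IsMatching {X Y : Type*} (μ : Set (X × Y)) : Prop :=
  ∀ e ∈ μ, ∀ e' ∈ μ, e ≠ e' → e.1 ≠ e'.1 ∧ e.2 ≠ e'.2

/-!
Let `S` be the set of `Y`-vertices reachable from the vertices used by `μ2` but not by `μ1`
along alternating paths (a `μ2`-edge into `X`, then the `μ1`-edge out of it). Take the
`μ2`-edges at `S` and the `μ1`-edges elsewhere. Since `S` is closed under the alternating step,
no `X`-vertex receives both a `μ2`-edge into `S` and a `μ1`-edge out of `S`, so this is a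
matching. A `μ1`-edge ending in `S` was entered by the alternating step, so its `X`-end keeps a
`μ2`-edge into `S`; and a `μ2`-vertex outside `S` is not a starting point, so it is `μ1`-matched.
-/

section Splice

variable {X Y : Type*} {μ μ1 μ2 : Set (X × Y)} {S : Set Y}

theorem IsMatching.eq_of_snd (h : IsMatching μ) {e e' : X × Y} (he : e ∈ μ) (he' : e' ∈ μ)
    (hsnd : e.2 = e'.2) : e = e' :=
  by_contra fun hne => (h e he e' he' hne).2 hsnd

def splice (μ1 μ2 : Set (X × Y)) (S : Set Y) : Set (X × Y) :=
  {e | e ∈ μ1 ∧ e.2 ∉ S} ∪ {e | e ∈ μ2 ∧ e.2 ∈ S}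

theorem splice_subset_union : splice μ1 μ2 S ⊆ μ1 ∪ μ2 := by
  rintro e (⟨he, -⟩ | ⟨he, -⟩)
  exacts [Or.inl he, Or.inr he]

theorem splice_disjoint_vertices
    (hS : ∀ ⦃x y y'⦄, y ∈ S → (x, y) ∈ μ2 → (x, y') ∈ μ1 → y' ∈ S)
    {e e' : X × Y} (he : e ∈ μ1) (heS : e.2 ∉ S) (he' : e' ∈ μ2) (he'S : e'.2 ∈ S) :
    e.1 ≠ e'.1 ∧ e.2 ≠ e'.2 := by
  obtain ⟨x, y⟩ := e
  obtain ⟨x', y'⟩ := e'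
  refine ⟨?_, fun hy => heS (hy ▸ he'S)⟩
  rintro (rfl : x = x')
  exact heS (hS he'S he' he)

theorem isMatching_splice (h1 : IsMatching μ1) (h2 : IsMatching μ2)
    (hS : ∀ ⦃x y y'⦄, y ∈ S → (x, y) ∈ μ2 → (x, y') ∈ μ1 → y' ∈ S) :
    IsMatching (splice μ1 μ2 S) := by
  rintro e (⟨he, heS⟩ | ⟨he, heS⟩) e' (⟨he', he'S⟩ | ⟨he', he'S⟩) hne
  · exact h1 e he e' he' hne
  · exact splice_disjoint_vertices hS he heS he' he'S
  · exact (splice_disjoint_vertices hS he' he'S he heS).imp Ne.symm Ne.symm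
  · exact h2 e he e' he' hne

theorem exists_mem_splice_of_mem_left
    (hS : ∀ ⦃x y⦄, (x, y) ∈ μ1 → y ∈ S → ∃ y', y' ∈ S ∧ (x, y') ∈ μ2)
    {x : X} {y : Y} (h : (x, y) ∈ μ1) : ∃ y', (x, y') ∈ splice μ1 μ2 S := by
  by_cases hy : y ∈ S
  · obtain ⟨y', hy'S, hy'⟩ := hS h hy
    exact ⟨y', Or.inr ⟨hy', hy'S⟩⟩
  · exact ⟨y, Or.inl ⟨h, hy⟩⟩

theorem exists_mem_splice_of_mem_right
    (hS : ∀ ⦃x y⦄, (x, y) ∈ μ2 → y ∉ S → ∃ x', (x', y) ∈ μ1)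
    {x : X} {y : Y} (h : (x, y) ∈ μ2) : ∃ x', (x', y) ∈ splice μ1 μ2 S := by
  by_cases hy : y ∈ S
  · exact ⟨x, Or.inr ⟨h, hy⟩⟩
  · obtain ⟨x', hx'⟩ := hS h hy
    exact ⟨x', Or.inl ⟨hx', hy⟩⟩

end Splice

inductive AlternatingReachable {X Y : Type*} (μ1 μ2 : Set (X × Y)) : Y → Prop
  | start {x : X} {y : Y} (h2 : (x, y) ∈ μ2) (h1 : ¬∃ x', (x', y) ∈ μ1) :
      AlternatingReachable μ1 μ2 y
  | step {x : X} {y y' : Y} (hy : AlternatingReachable μ1 μ2 y) (h2 : (x, y) ∈ μ2)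
      (h1 : (x, y') ∈ μ1) : AlternatingReachable μ1 μ2 y'

namespace AlternatingReachable

variable {X Y : Type*} {μ1 μ2 : Set (X × Y)}

theorem exists_mem_of_mem_left (h1 : IsMatching μ1) {x : X} {y : Y}
    (hy : AlternatingReachable μ1 μ2 y) (hxy : (x, y) ∈ μ1) :
    ∃ y', AlternatingReachable μ1 μ2 y' ∧ (x, y') ∈ μ2 := by
  cases hy with
  | start _ hfree => exact absurd ⟨x, hxy⟩ hfree
  | @step x' y' _ hy' h2 h1' =>
    obtain rfl : x' = x := congrArg Prod.fst (h1.eq_of_snd h1' hxy rfl)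
    exact ⟨y', hy', h2⟩

end AlternatingReachable

theorem exists_mem_left_of_not_alternatingReachable {X Y : Type*} {μ1 μ2 : Set (X × Y)}
    {x : X} {y : Y} (hxy : (x, y) ∈ μ2) (hy : ¬AlternatingReachable μ1 μ2 y) :
    ∃ x', (x', y) ∈ μ1 :=
  by_contra fun hfree => hy (.start hxy hfree)

/-- Dulmage–Mendelsohn: given two compatible matchings `μ1` and `μ2`, there is a
compatible matching `μ3` matching every `X`-vertex matched by `μ1` and saturating every
`Y`-vertex used by `μ2`. -/
theorem dulmage_mendelsohn {X Y : Type*} (E μ1 μ2 : Set (X × Y))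
    (h1 : IsMatching μ1) (h2 : IsMatching μ2) (h1E : μ1 ⊆ E) (h2E : μ2 ⊆ E) :
    ∃ μ3 : Set (X × Y), μ3 ⊆ E ∧ IsMatching μ3 ∧
      (∀ x : X, (∃ y, (x, y) ∈ μ1) → ∃ y, (x, y) ∈ μ3) ∧
      (∀ y : Y, (∃ x, (x, y) ∈ μ2) → ∃ x, (x, y) ∈ μ3) := by
  refine ⟨splice μ1 μ2 {y | AlternatingReachable μ1 μ2 y},
    splice_subset_union.trans (Set.union_subset h1E h2E),
    isMatching_splice h1 h2 fun _ _ _ => AlternatingReachable.step,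
    fun x ⟨y, hxy⟩ => exists_mem_splice_of_mem_left ?_ hxy,
    fun y ⟨x, hxy⟩ => exists_mem_splice_of_mem_right ?_ hxy⟩
  · exact fun _ _ hxy hy => AlternatingReachable.exists_mem_of_mem_left h1 hy hxy
  · exact fun _ _ hxy hy => exists_mem_left_of_not_alternatingReachable hxy hy
end

section
/- Possibility result: suppose every patient is a beneficiary of at most b sparse categories (a category c is sparse if |B_c| < q, where q is the total number of vaccines), and every category c satisfies |B_c| ≥ min{q, b·r_c}. Then there exists a matching assigning all q vaccines to beneficiaries, i.e., a matching μ with |μ⁻¹(c)| = r_c for every category c and μ(i) = c ⟹ i ∈ B_c. -/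
/-!
Split every category `c` into `r c` unit slots, each of which may go to any patient of `B c`.
An assignment filling all reserves is an injection from slots to patients landing in the right
beneficiary sets, so by Hall's theorem it suffices that any set `T` of categories has at least
`∑ c ∈ T, r c` beneficiaries in total. If `T` contains a non-sparse category, that category alone
has `q` beneficiaries. Otherwise `|B c| ≥ b * r c` on `T`, and since no patient is counted in
more than `b` of these sparse `B c`, double counting gives `b * ∑ r c ≤ ∑ |B c| ≤ b * |⋃ B c|`.
-/

open Finset
open scoped Classical

theorem Finset.sum_card_le_mul_card_biUnion {κ ι : Type*} [DecidableEq ι] (T : Finset κ)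
    (B : κ → Finset ι) (b : ℕ) (h : ∀ i, #{c ∈ T | i ∈ B c} ≤ b) :
    ∑ c ∈ T, #(B c) ≤ b * #(T.biUnion B) := by
  set N := T.biUnion B
  calc ∑ c ∈ T, #(B c)
      = ∑ c ∈ T, #(N.bipartiteAbove (fun c i => i ∈ B c) c) := by
        refine sum_congr rfl fun c hc => ?_
        rw [bipartiteAbove, filter_mem_eq_inter, inter_eq_right.2 (subset_biUnion_of_mem B hc)]
    _ = ∑ i ∈ N, #(T.bipartiteBelow (fun c i => i ∈ B c) i) :=
        sum_card_bipartiteAbove_eq_sum_card_bipartiteBelow _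
    _ ≤ ∑ _i ∈ N, b := sum_le_sum fun i _ => h i
    _ = b * #N := by rw [sum_const, smul_eq_mul, mul_comm]

section Reserves

variable {κ ι : Type*} (r : κ → ℕ) (B : κ → Finset ι)

theorem exists_injective_slot_of_sum_le_card_biUnion [DecidableEq ι]
    (hall : ∀ T : Finset κ, ∑ c ∈ T, r c ≤ #(T.biUnion B)) :
    ∃ f : (Σ c, Fin (r c)) → ι, Function.Injective f ∧ ∀ a, f a ∈ B a.1 := by
  refine (all_card_le_biUnion_card_iff_exists_injective fun a : Σ c, Fin (r c) => B a.1).1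
    fun s => ?_
  have hs : s ⊆ (s.image Sigma.fst).sigma fun _ => univ := fun a ha => by
    simpa using mem_image_of_mem Sigma.fst ha
  calc #s ≤ ∑ c ∈ s.image Sigma.fst, r c := by simpa using card_le_card hs
    _ ≤ #((s.image Sigma.fst).biUnion B) := hall _
    _ = #(s.biUnion fun a => B a.1) := by rw [image_biUnion]

theorem exists_assignment_of_injective_slot [Fintype ι] {f : (Σ c, Fin (r c)) → ι}
    (hf : Function.Injective f) (hfB : ∀ a, f a ∈ B a.1) :
    ∃ μ : ι → Option κ,
      (∀ c, (univ.filter fun i => μ i = some c).card = r c) ∧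
      (∀ i c, μ i = some c → i ∈ B c) := by
  set μ : ι → Option κ := fun i => (Function.partialInv f i).map Sigma.fst
  have hμ : ∀ i c, μ i = some c ↔ ∃ j, f ⟨c, j⟩ = i := by
    intro i c
    simp only [μ, Option.map_eq_some_iff]
    constructor
    · rintro ⟨⟨c, j⟩, hi, rfl⟩
      exact ⟨j, (hf.isPartialInv _ _).1 hi⟩
    · rintro ⟨j, hi⟩
      exact ⟨⟨c, j⟩, (hf.isPartialInv _ _).2 hi, rfl⟩
  refine ⟨μ, fun c => ?_, fun i c hi => ?_⟩
  · have hfiber : (univ.filter fun i => μ i = some c) = univ.image fun j => f ⟨c, j⟩ := by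
      ext i
      simp [hμ]
    have hinj : Function.Injective fun j : Fin (r c) => f ⟨c, j⟩ := fun j j' h =>
      eq_of_heq (Sigma.mk.inj_iff.1 (hf h)).2
    rw [hfiber, card_image_of_injective _ hinj, card_univ, Fintype.card_fin]
  · obtain ⟨j, rfl⟩ := (hμ i c).1 hi
    exact hfB ⟨c, j⟩

theorem sum_le_card_biUnion_of_sparse [Fintype κ] [DecidableEq ι] (b : ℕ) (hb : 0 < b)
    (hsparse : ∀ i, #{c | i ∈ B c ∧ #(B c) < ∑ c', r c'} ≤ b)
    (hB : ∀ c, min (∑ c', r c') (b * r c) ≤ #(B c)) (T : Finset κ) :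
    ∑ c ∈ T, r c ≤ #(T.biUnion B) := by
  set q := ∑ c', r c'
  by_cases hdense : ∃ c ∈ T, q ≤ #(B c)
  · obtain ⟨c, hcT, hc⟩ := hdense
    calc ∑ c ∈ T, r c ≤ q := sum_le_sum_of_subset (subset_univ T)
      _ ≤ #(B c) := hc
      _ ≤ #(T.biUnion B) := card_le_card (subset_biUnion_of_mem B hcT)
  · push Not at hdense
    have hrB : ∀ c ∈ T, b * r c ≤ #(B c) := fun c hc =>
      (min_le_iff.1 (hB c)).resolve_left (hdense c hc).not_ge
    have hcount : ∀ i, #{c ∈ T | i ∈ B c} ≤ b := fun i =>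
      (card_le_card fun c hc => by
        simp only [mem_filter, mem_univ, true_and] at hc ⊢
        exact ⟨hc.2, hdense c hc.1⟩).trans (hsparse i)
    refine Nat.le_of_mul_le_mul_left ?_ hb
    calc b * ∑ c ∈ T, r c = ∑ c ∈ T, b * r c := mul_sum _ _ _
      _ ≤ ∑ c ∈ T, #(B c) := sum_le_sum hrB
      _ ≤ b * #(T.biUnion B) := sum_card_le_mul_card_biUnion T B b hcount

end Reserves

theorem possibility_general {ι κ : Type*} [Fintype ι] [Fintype κ] [DecidableEq ι]
    (r : κ → ℕ) (B : κ → Finset ι) (b : ℕ) (hb : 0 < b)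
    (hsparse : ∀ i : ι,
      (Finset.univ.filter fun c : κ => i ∈ B c ∧ (B c).card < ∑ c', r c').card ≤ b)
    (hB : ∀ c, min (∑ c', r c') (b * r c) ≤ (B c).card) :
    ∃ μ : ι → Option κ,
      (∀ c, (Finset.univ.filter fun i => μ i = some c).card = r c) ∧
      (∀ i c, μ i = some c → i ∈ B c) := by
  obtain ⟨f, hf, hfB⟩ := exists_injective_slot_of_sum_le_card_biUnion r B
    (sum_le_card_biUnion_of_sparse r B b hb hsparse hB)
  exact exists_assignment_of_injective_slot r B hf hfB

/-- Possibility result: if every patient is a beneficiary of at most `b` sparse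
categories (`c` is sparse when `|B c| < q`, `q = ∑ c, r c`) and `|B c| ≥ min q (b * r c)`
for every category, then there is a matching assigning all `q` vaccines to
beneficiaries: it fills every reserve exactly and only uses beneficiaries. -/
theorem possibility {ι κ : Type*} [Fintype ι] [Fintype κ] [DecidableEq ι]
    (r : κ → ℕ) (B : κ → Finset ι) (b : ℕ) (hb : 0 < b) (hr : ∀ c, 0 < r c)
    (hsparse : ∀ i : ι,
      (Finset.univ.filter fun c : κ => i ∈ B c ∧ (B c).card < ∑ c', r c').card ≤ b)
    (hB : ∀ c, min (∑ c', r c') (b * r c) ≤ (B c).card) :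
    ∃ μ : ι → Option κ,
      (∀ c, (Finset.univ.filter fun i => μ i = some c).card = r c) ∧
      (∀ i c, μ i = some c → i ∈ B c) :=
  possibility_general r B b hb hsparse hB
end

section
/- If an eligibility-complying matching μ admits an even alternating chain with positive potential, then μ is not max-in-max: augmenting the chain yields an eligibility-complying matching of the same cardinality with strictly more beneficiary assignments. -/
/-!
Augmenting the chain moves each patient `i (k-1)` onto the seat of `c k` vacated by `i k`.
Among the chain patients, those seated before are exactly `i 1, …, i m` (since `i 0` is
unmatched or equals `i m`), `i k` at `c k`; those seated afterwards are exactly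
`i 0, …, i (m-1)`, `i (k-1)` at `c k`. So every category keeps its number of patients, the
number of matched patients is unchanged, and the number of beneficiary assignments grows by
exactly the potential.
-/

open scoped Classical

variable {ι κ : Type*} [Fintype ι] [Fintype κ]

/-- `(i 0, c 0, i 1, c 1, …, c (m-1), i m)` is an even alternating chain in `μ`:
either `i 0` is unmatched or the chain is a cycle (`i 0 = i m`); each `i (k-1)` is
eligible for `c k`; each `i k` is matched to `c k`; and the patients are distinct
(except possibly the two endpoints of a cycle). -/
def IsEvenChain (E : κ → Finset ι) (μ : ι → Option κ) {m : ℕ}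
    (i : Fin (m + 1) → ι) (c : Fin m → κ) : Prop :=
  (μ (i 0) = none ∨ i 0 = i (Fin.last m)) ∧
  (∀ k : Fin m, i k.castSucc ∈ E (c k)) ∧
  (∀ k : Fin m, μ (i k.succ) = some (c k)) ∧
  (∀ k l : Fin (m + 1), i k = i l →
    k = l ∨ (k = 0 ∧ l = Fin.last m) ∨ (l = 0 ∧ k = Fin.last m))

/-- The potential of an alternating chain. -/
noncomputable def potential (B : κ → Finset ι) {m : ℕ}
    (i : Fin (m + 1) → ι) (c : Fin m → κ) : ℤ :=
  ((Finset.univ.filter fun k : Fin m => i k.castSucc ∈ B (c k)).card : ℤ) -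
    ((Finset.univ.filter fun k : Fin m => i k.succ ∈ B (c k)).card : ℤ)

/-- `μ'` is the matching obtained from `μ` by augmenting the chain `(i, c)`. -/
def Augments (μ μ' : ι → Option κ) {m : ℕ}
    (i : Fin (m + 1) → ι) (c : Fin m → κ) : Prop :=
  (∀ k : Fin m, μ' (i k.castSucc) = some (c k)) ∧
  (i 0 ≠ i (Fin.last m) → μ' (i (Fin.last m)) = none) ∧
  (∀ j, (∀ k, j ≠ i k) → μ' j = μ j)

section

open Finset

-- Fresh `ι κ`, so that the lemmas below carry only the `Fintype` instances they use.
variable {ι κ : Type*}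

noncomputable def assignedCount [Fintype ι] (μ : ι → Option κ) (p : ι → κ → Prop) : ℕ :=
  (univ.filter fun j => ∃ c, μ j = some c ∧ p j c).card

lemma matchCount_eq_assignedCount [Fintype ι] (μ : ι → Option κ) (c : κ) :
    matchCount μ c = assignedCount μ fun _ c' => c' = c := by
  simp only [matchCount, assignedCount, exists_eq_right]

lemma matchedCard_eq_assignedCount [Fintype ι] (μ : ι → Option κ) :
    matchedCard μ = assignedCount μ fun _ _ => True := by
  simp only [matchedCard, assignedCount, and_true, Option.ne_none_iff_exists']

lemma benefCard_eq_assignedCount [Fintype ι] (B : κ → Finset ι) (μ : ι → Option κ) :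
    benefCard B μ = assignedCount μ fun j c => j ∈ B c := by
  simp only [benefCard, assignedCount]

lemma assignedCount_eq_add [Fintype ι] (ν : ι → Option κ) (T : Finset ι) (p : ι → κ → Prop) :
    assignedCount ν p = (T.filter fun j => ∃ c, ν j = some c ∧ p j c).card +
      (Tᶜ.filter fun j => ∃ c, ν j = some c ∧ p j c).card := by
  rw [assignedCount, ← card_union_of_disjoint (disjoint_filter_filter disjoint_compl_right),
    ← filter_union, union_compl]

lemma card_filter_assigned_eq {α : Type*} [Fintype α] {ν : ι → Option κ} {T : Finset ι}
    {f : α → ι} {c : α → κ} (hf : Function.Injective f) (hfT : ∀ a, f a ∈ T)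
    (hν : ∀ a, ν (f a) = some (c a)) (hcover : ∀ j ∈ T, ν j ≠ none → ∃ a, f a = j)
    (p : ι → κ → Prop) :
    (T.filter fun j => ∃ c', ν j = some c' ∧ p j c').card =
      (univ.filter fun a => p (f a) (c a)).card := by
  rw [← card_image_of_injective (univ.filter fun a => p (f a) (c a)) hf]
  congr 1
  ext j
  simp only [mem_filter, mem_image, mem_univ, true_and]
  constructor
  · rintro ⟨hj, c', hc', hp⟩
    obtain ⟨a, rfl⟩ := hcover j hj (by simp [hc'])
    rw [hν a, Option.some_inj] at hc'
    exact ⟨a, hc' ▸ hp, rfl⟩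
  · rintro ⟨a, hp, rfl⟩
    exact ⟨hfT a, c a, hν a, hp⟩

variable {E : κ → Finset ι} {μ μ' : ι → Option κ} {m : ℕ} {i : Fin (m + 1) → ι}
  {c : Fin m → κ}

lemma not_maxInMax_of_benefCard_lt [Fintype ι] {r : κ → ℕ} {B : κ → Finset ι}
    (hμ' : Valid r E μ') (hcard : matchedCard μ' = matchedCard μ)
    (hlt : benefCard B μ < benefCard B μ') : ¬ MaxInMax r E B μ := by
  rintro ⟨⟨-, hmax⟩, hbest⟩
  exact (hbest μ' ⟨hμ', fun ν hν => hcard ▸ hmax ν hν⟩).not_gt hlt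

namespace IsEvenChain

lemma injective_succ (hch : IsEvenChain E μ i c) : Function.Injective (i ∘ Fin.succ) := by
  intro k l h
  rcases hch.2.2.2 _ _ h with h' | ⟨h', -⟩ | ⟨h', -⟩
  · exact Fin.succ_injective _ h'
  · exact absurd h' (Fin.succ_ne_zero k)
  · exact absurd h' (Fin.succ_ne_zero l)

lemma injective_castSucc (hch : IsEvenChain E μ i c) :
    Function.Injective (i ∘ Fin.castSucc) := by
  intro k l h
  rcases hch.2.2.2 _ _ h with h' | ⟨-, h'⟩ | ⟨-, h'⟩
  · exact Fin.castSucc_injective _ h'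
  · exact absurd h' (Fin.castSucc_lt_last l).ne
  · exact absurd h' (Fin.castSucc_lt_last k).ne

lemma exists_succ_eq_of_ne_none (hch : IsEvenChain E μ i c) (hm : 0 < m) {l : Fin (m + 1)}
    (hl : μ (i l) ≠ none) : ∃ k : Fin m, i k.succ = i l := by
  by_cases hl0 : l = 0
  · subst hl0
    refine ⟨⟨m - 1, by omega⟩, ?_⟩
    rw [hch.1.resolve_left hl]
    congr 1
    ext
    simp only [Fin.val_succ, Fin.val_last]
    omega
  · obtain ⟨k, rfl⟩ := Fin.exists_succ_eq.mpr hl0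
    exact ⟨k, rfl⟩

lemma exists_augments (hch : IsEvenChain E μ i c) : ∃ μ', Augments μ μ' i c := by
  let μ' : ι → Option κ := fun j =>
    if h : ∃ k : Fin m, i k.castSucc = j then some (c h.choose)
    else if j = i (Fin.last m) then none else μ j
  refine ⟨μ', fun k => ?_, fun hcycle => ?_, fun j hj => ?_⟩
  · have h : ∃ k' : Fin m, i k'.castSucc = i k.castSucc := ⟨k, rfl⟩
    simp only [μ', dif_pos h, hch.injective_castSucc h.choose_spec]
  · have h : ¬ ∃ k : Fin m, i k.castSucc = i (Fin.last m) := by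
      rintro ⟨k, hk⟩
      rcases hch.2.2.2 _ _ hk with h' | ⟨h', -⟩ | ⟨-, h'⟩
      · exact (Fin.castSucc_lt_last k).ne h'
      · exact hcycle (by rw [← hk, ← h'])
      · exact (Fin.castSucc_lt_last k).ne h'
    simp only [μ', dif_neg h, if_true]
  · have h : ¬ ∃ k : Fin m, i k.castSucc = j := fun ⟨k, hk⟩ => hj _ hk.symm
    simp only [μ', dif_neg h, if_neg (hj _)]

end IsEvenChain

namespace Augments

lemma exists_castSucc_eq_of_ne_none (hμ' : Augments μ μ' i c) (hm : 0 < m)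
    {l : Fin (m + 1)} (hl : μ' (i l) ≠ none) : ∃ k : Fin m, i k.castSucc = i l := by
  by_cases hll : l = Fin.last m
  · subst hll
    by_cases hcycle : i 0 = i (Fin.last m)
    · exact ⟨⟨0, hm⟩, hcycle⟩
    · exact absurd (hμ'.2.1 hcycle) hl
  · obtain ⟨k, rfl⟩ := Fin.exists_castSucc_eq.mpr hll
    exact ⟨k, rfl⟩

lemma complies (hμ' : Augments μ μ' i c) (hch : IsEvenChain E μ i c) (hm : 0 < m)
    (hμ : Complies E μ) : Complies E μ' := by
  intro j c' hj
  by_cases hchain : ∀ l, j ≠ i l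
  · exact hμ j c' (hμ'.2.2 j hchain ▸ hj)
  · obtain ⟨l, rfl⟩ := not_forall_not.mp hchain
    obtain ⟨k, hk⟩ := hμ'.exists_castSucc_eq_of_ne_none hm (hj ▸ Option.some_ne_none c')
    rw [← hk, hμ'.1 k, Option.some_inj] at hj
    exact hk ▸ hj ▸ hch.2.1 k

lemma assignedCount_add [Fintype ι] (hμ' : Augments μ μ' i c) (hch : IsEvenChain E μ i c)
    (hm : 0 < m) (p : ι → κ → Prop) :
    assignedCount μ' p + (univ.filter fun k => p (i k.succ) (c k)).card =
      assignedCount μ p + (univ.filter fun k => p (i k.castSucc) (c k)).card := by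
  set T := univ.image i
  have hiT : ∀ l, i l ∈ T := fun l => mem_image_of_mem i (mem_univ l)
  have hout : ∀ j ∈ Tᶜ, μ' j = μ j := fun j hj =>
    hμ'.2.2 j fun l hl => mem_compl.mp hj (hl ▸ hiT l)
  have hbefore := card_filter_assigned_eq hch.injective_succ (fun _ => hiT _) hch.2.2.1
    (fun j hj hμj => by
      obtain ⟨l, -, rfl⟩ := mem_image.mp hj
      exact hch.exists_succ_eq_of_ne_none hm hμj) p
  have hafter := card_filter_assigned_eq hch.injective_castSucc (fun _ => hiT _) hμ'.1
    (fun j hj hμj => by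
      obtain ⟨l, -, rfl⟩ := mem_image.mp hj
      exact hμ'.exists_castSucc_eq_of_ne_none hm hμj) p
  rw [assignedCount_eq_add μ' T, assignedCount_eq_add μ T,
    filter_congr (s := Tᶜ) fun j hj => by rw [hout j hj]]
  simp only [Function.comp_apply] at hbefore hafter
  omega

variable [Fintype ι] (hμ' : Augments μ μ' i c) (hch : IsEvenChain E μ i c) (hm : 0 < m)
include hμ' hch hm

lemma matchCount_eq (c₀ : κ) : matchCount μ' c₀ = matchCount μ c₀ := by
  have h := hμ'.assignedCount_add hch hm fun _ c' => c' = c₀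
  rw [matchCount_eq_assignedCount, matchCount_eq_assignedCount]
  omega

lemma matchedCard_eq : matchedCard μ' = matchedCard μ := by
  have h := hμ'.assignedCount_add hch hm fun _ _ => True
  rw [matchedCard_eq_assignedCount, matchedCard_eq_assignedCount]
  omega

lemma benefCard_eq_add_potential (B : κ → Finset ι) :
    (benefCard B μ' : ℤ) = benefCard B μ + potential B i c := by
  have h := hμ'.assignedCount_add hch hm fun j c' => j ∈ B c'
  -- `h` counts with the classical decidability instance, `potential` with that of `∈`.
  rw [filter_congr_decidable univ (fun k => i k.succ ∈ B (c k)),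
    filter_congr_decidable univ (fun k => i k.castSucc ∈ B (c k))] at h
  rw [benefCard_eq_assignedCount, benefCard_eq_assignedCount, potential]
  omega

lemma valid {r : κ → ℕ} (hμ : Valid r E μ) : Valid r E μ' :=
  ⟨fun c₀ => (hμ'.matchCount_eq hch hm c₀).trans_le (hμ.1 c₀), hμ'.complies hch hm hμ.2⟩

end Augments
end

theorem chain_not_maxInMax_general (r : κ → ℕ) (E B : κ → Finset ι)
    (μ : ι → Option κ) (hμ : Valid r E μ) (m : ℕ) (hm : 0 < m)
    (i : Fin (m + 1) → ι) (c : Fin m → κ)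
    (hch : IsEvenChain E μ i c) (hΦ : 0 < potential B i c) :
    (∃ μ', Augments μ μ' i c ∧ Valid r E μ' ∧ matchedCard μ' = matchedCard μ ∧
      benefCard B μ < benefCard B μ') ∧
    ¬ MaxInMax r E B μ := by
  obtain ⟨μ', hμ'⟩ := hch.exists_augments
  have hvalid := hμ'.valid hch hm hμ
  have hcard := hμ'.matchedCard_eq hch hm
  have hlt : benefCard B μ < benefCard B μ' := by
    have := hμ'.benefCard_eq_add_potential hch hm B
    omega
  exact ⟨⟨μ', hμ', hvalid, hcard, hlt⟩, not_maxInMax_of_benefCard_lt hvalid hcard hlt⟩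

/-- If an eligibility-complying matching admits an even alternating chain with positive
potential, then augmenting the chain yields an eligibility-complying matching of the
same cardinality with strictly more beneficiary assignments; in particular `μ` is not
max-in-max. -/
theorem chain_not_maxInMax (r : κ → ℕ) (E B : κ → Finset ι) (hBE : ∀ c, B c ⊆ E c)
    (μ : ι → Option κ) (hμ : Valid r E μ) (m : ℕ) (hm : 0 < m)
    (i : Fin (m + 1) → ι) (c : Fin m → κ)
    (hch : IsEvenChain E μ i c) (hΦ : 0 < potential B i c) :
    (∃ μ', Augments μ μ' i c ∧ Valid r E μ' ∧ matchedCard μ' = matchedCard μ ∧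
      benefCard B μ < benefCard B μ') ∧
    ¬ MaxInMax r E B μ :=
  chain_not_maxInMax_general r E B μ hμ m hm i c hch hΦ
end

section
/- DAIM property 1 (monotone category fill): if μ' is the output of patient-proposing Deferred Acceptance with Initial Matching started from matching μ, then for every category c, the number of patients matched to c under μ' is at least the number matched to c under μ. -/
open scoped Classical

variable {ι κ : Type*} [Fintype ι] [Fintype κ]

/-- Eligible patients of category `c`: those strictly above the eligibility threshold
`η c` in the priority order (encoded by the rank function `πr c`, lower rank = higher
priority). -/
noncomputable def Elig (πr : κ → ι → ℕ) (η : κ → ℕ) (c : κ) : Finset ι :=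
  Finset.univ.filter fun i => πr c i < η c

/-- Beneficiaries of category `c`: those strictly above the beneficiary threshold. -/
noncomputable def Benef (πr : κ → ι → ℕ) (β : κ → ℕ) (c : κ) : Finset ι :=
  Finset.univ.filter fun i => πr c i < β c

/-- Preference rank of category `c` for patient `i` in the hypothetical market built
from the initial matching `μ` and the precedence order `prec`: a patient ranks first the
category she is initially matched to, and the remaining categories by precedence. -/
noncomputable def prank (prec : κ → ℕ) (μ : ι → Option κ) (i : ι) (c : κ) : ℕ :=
  if μ i = some c then 0 else prec c + 1

/-- `μ'` is a stable matching of the hypothetical two-sided market associated with the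
initial matching `μ`: it is feasible, individually rational, and admits no blocking
pair. -/
def Stable (r : κ → ℕ) (πr : κ → ι → ℕ) (η : κ → ℕ) (prec : κ → ℕ)
    (μ μ' : ι → Option κ) : Prop :=
  Caps r μ' ∧ Complies (Elig πr η) μ' ∧
  ¬ ∃ i c, i ∈ Elig πr η c ∧
      (μ' i = none ∨ ∃ c', μ' i = some c' ∧ prank prec μ i c < prank prec μ i c') ∧
      (matchCount μ' c < r c ∨ ∃ j, μ' j = some c ∧ πr c i < πr c j)

/-- `μ'` is the output of patient-proposing Deferred Acceptance with Initial Matching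
`μ`: the patient-optimal stable matching of the hypothetical market. -/
def DAIMOutput (r : κ → ℕ) (πr : κ → ι → ℕ) (η : κ → ℕ) (prec : κ → ℕ)
    (μ μ' : ι → Option κ) : Prop :=
  Stable r πr η prec μ μ' ∧
  ∀ μ'', Stable r πr η prec μ μ'' →
    ∀ i c₂, μ'' i = some c₂ →
      ∃ c₁, μ' i = some c₁ ∧ prank prec μ i c₁ ≤ prank prec μ i c₂

/-!
If every patient initially matched to `c` is still matched to `c`, the count cannot drop.
Otherwise some such patient `i` has left `c`; she is eligible for `c` and ranks it first in
the hypothetical market, so she would block with `c` unless `c` is filled to capacity.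
Stability therefore forces `c` to be full, and `μ` never exceeds that capacity.
-/

omit [Fintype κ] in
theorem matchCount_le_matchCount {μ μ' : ι → Option κ} {c : κ}
    (h : ∀ i, μ i = some c → μ' i = some c) : matchCount μ c ≤ matchCount μ' c :=
  Finset.card_le_card fun i hi => by
    simp only [Finset.mem_filter, Finset.mem_univ, true_and] at hi ⊢
    exact h i hi

omit [Fintype ι] [Fintype κ] in
theorem prank_lt_of_initial {prec : κ → ℕ} {μ : ι → Option κ} {i : ι} {c c' : κ}
    (hic : μ i = some c) (hne : c' ≠ c) : prank prec μ i c < prank prec μ i c' := by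
  simp [prank, hic, hne.symm]

omit [Fintype κ] in
theorem Stable.capacity_le_matchCount {r : κ → ℕ} {πr : κ → ι → ℕ} {η prec : κ → ℕ}
    {μ μ' : ι → Option κ} (hst : Stable r πr η prec μ μ') {i : ι} {c : κ}
    (helig : i ∈ Elig πr η c) (hic : μ i = some c) (hic' : μ' i ≠ some c) :
    r c ≤ matchCount μ' c := by
  have hprefers : μ' i = none ∨ ∃ c', μ' i = some c' ∧
      prank prec μ i c < prank prec μ i c' := by
    cases hcase : μ' i with
    | none => exact Or.inl rfl
    | some c' =>
      have hne : c' ≠ c := by rintro rfl; exact hic' hcase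
      exact Or.inr ⟨c', rfl, prank_lt_of_initial hic hne⟩
  by_contra hlt
  exact hst.2.2 ⟨i, c, helig, hprefers, Or.inl (not_le.mp hlt)⟩

theorem daim_monotone_fill_general (r : κ → ℕ) (πr : κ → ι → ℕ) (η : κ → ℕ) (prec : κ → ℕ)
    (μ μ' : ι → Option κ) (hμ : Valid r (Elig πr η) μ)
    (hout : DAIMOutput r πr η prec μ μ') :
    ∀ c, matchCount μ c ≤ matchCount μ' c := by
  intro c
  by_cases hstay : ∀ i, μ i = some c → μ' i = some c
  · exact matchCount_le_matchCount hstay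
  · obtain ⟨i, hic, hic'⟩ : ∃ i, μ i = some c ∧ μ' i ≠ some c := by simpa using hstay
    calc matchCount μ c ≤ r c := hμ.1 c
      _ ≤ matchCount μ' c := hout.1.capacity_le_matchCount (hμ.2 i c hic) hic hic'

/-- DAIM property 1 (monotone category fill): the DAIM output matches at least as many
patients to each category as the initial matching. -/
theorem daim_monotone_fill (r : κ → ℕ) (πr : κ → ι → ℕ) (η : κ → ℕ) (prec : κ → ℕ)
    (hprec : Function.Injective prec) (hπ : ∀ c, Function.Injective (πr c))
    (μ μ' : ι → Option κ) (hμ : Valid r (Elig πr η) μ)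
    (hout : DAIMOutput r πr η prec μ μ') :
    ∀ c, matchCount μ c ≤ matchCount μ' c :=
  daim_monotone_fill_general r πr η prec μ μ' hμ hout
end

section
/- DAIM property 3 (respecting priorities): the output μ' of patient-proposing Deferred Acceptance with Initial Matching respects priorities: if μ'(i) = c and μ'(i') = ∅ for patients i, i', then i π_c i'. -/
open scoped Classical

variable {ι κ : Type*} [Fintype ι] [Fintype κ]

/-- DAIM property 3 (respecting priorities): if `i` is matched to `c` and `i'` is
unmatched under the DAIM output, then `i` has strictly higher priority than `i'` at
`c`. -/
theorem daim_respects_priorities (r : κ → ℕ) (πr : κ → ι → ℕ) (η : κ → ℕ)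
    (prec : κ → ℕ)
    (hprec : Function.Injective prec) (hπ : ∀ c, Function.Injective (πr c))
    (μ μ' : ι → Option κ) (hμ : Valid r (Elig πr η) μ)
    (hout : DAIMOutput r πr η prec μ μ') :
    ∀ i i' c, μ' i = some c → μ' i' = none → πr c i < πr c i' := by
  intro i i' c hi hi'
  obtain ⟨⟨hcap, hcomp, hnb⟩, _⟩ := hout
  by_contra h
  push_neg at h
  rcases lt_or_eq_of_le h with hlt | heq
  · have hielig := hcomp i c hi
    simp only [Elig, Finset.mem_filter] at hielig ⊢
    exact hnb ⟨i', c, by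
      simp only [Elig, Finset.mem_filter]
      exact ⟨Finset.mem_univ _, lt_trans hlt hielig.2⟩,
      Or.inl hi', Or.inr ⟨i, hi, hlt⟩⟩
  · have : i = i' := hπ c heq.symm
    rw [this, hi'] at hi
    cases hi
end

section
/- Preservation of max-in-max under DAIM: if the initial matching μ fed into DAIM is max-in-max and complies with eligibility requirements, then the output μ' is also max-in-max; in particular, for every category c the number of beneficiaries of c matched to c under μ' is at least that under μ. -/
open scoped Classical

variable {ι κ : Type*} [Fintype ι] [Fintype κ]

/-! A patient who loses her initial category `c` under the DAIM output prefers `c` to what she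
gets, so stability forces `c` to be full of patients of at least her priority. Hence, for every
set of patients closed upwards in `c`'s priority (everyone, or the beneficiaries of `c`), the
number of them matched to `c` does not drop. Summing over categories, neither the number of
matched patients nor the number of beneficiary assignments drops, so maximality is inherited. -/

open Finset

lemma card_filter_exists_eq_sum (μ : ι → Option κ) (p : ι → κ → Prop) :
    #{i | ∃ c, μ i = some c ∧ p i c} = ∑ c, #{i | p i c ∧ μ i = some c} := by
  simp only [card_filter]
  rw [sum_comm]
  refine sum_congr rfl fun i _ => ?_
  cases μ i with
  | none => simp
  | some c₀ => simp [ite_and, and_comm (a := p i _)]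

lemma matchedCard_eq_sum (μ : ι → Option κ) : matchedCard μ = ∑ c, matchCount μ c := by
  simpa [matchedCard, matchCount, Option.ne_none_iff_exists']
    using card_filter_exists_eq_sum μ fun _ _ => True

lemma benefCard_eq_sum (B : κ → Finset ι) (μ : ι → Option κ) :
    benefCard B μ = ∑ c, #{i | i ∈ B c ∧ μ i = some c} := by
  rw [benefCard]
  convert card_filter_exists_eq_sum μ fun i c => i ∈ B c

omit [Fintype κ] in
lemma MaxInMax.of_le {r : κ → ℕ} {E B : κ → Finset ι} {μ μ' : ι → Option κ}
    (hμ : MaxInMax r E B μ) (hvalid : Valid r E μ')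
    (hmatched : matchedCard μ ≤ matchedCard μ') (hbenef : benefCard B μ ≤ benefCard B μ') :
    MaxInMax r E B μ' :=
  have hmaxRes : MaxRes r E μ' := ⟨hvalid, fun ν hν => (hμ.1.2 ν hν).trans hmatched⟩
  ⟨hmaxRes, fun ν hν => (hμ.2 ν hν).trans hbenef⟩

section Stable

omit [Fintype κ]

variable {r : κ → ℕ} {πr : κ → ι → ℕ} {η : κ → ℕ} {prec : κ → ℕ} {μ μ' : ι → Option κ}

omit [Fintype ι] in
lemma prefers_initial_of_ne {j : ι} {c : κ} (hj : μ j = some c) (hj' : μ' j ≠ some c) :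
    μ' j = none ∨ ∃ c', μ' j = some c' ∧ prank prec μ j c < prank prec μ j c' := by
  cases h : μ' j with
  | none => exact Or.inl rfl
  | some c' =>
    have hc' : c' ≠ c := fun e => hj' (e ▸ h)
    exact Or.inr ⟨c', rfl, by simp [prank, hj, hc'.symm]⟩

lemma Stable.full_of_displaced (hS : Stable r πr η prec μ μ') {j : ι} {c : κ}
    (hel : j ∈ Elig πr η c) (hj : μ j = some c) (hj' : μ' j ≠ some c) :
    r c ≤ matchCount μ' c ∧ ∀ k, μ' k = some c → πr c k ≤ πr c j := by
  have hnb : ¬(matchCount μ' c < r c ∨ ∃ k, μ' k = some c ∧ πr c j < πr c k) :=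
    fun h => hS.2.2 ⟨j, c, hel, prefers_initial_of_ne hj hj', h⟩
  simpa [not_or, not_lt] using hnb

lemma Stable.card_filter_le (hS : Stable r πr η prec μ μ') (hμ : Valid r (Elig πr η) μ)
    {c : κ} {s : Finset ι} (hs : ∀ j ∈ s, ∀ k, πr c k ≤ πr c j → k ∈ s) :
    #{j | j ∈ s ∧ μ j = some c} ≤ #{j | j ∈ s ∧ μ' j = some c} := by
  by_cases hstay : ∀ j ∈ s, μ j = some c → μ' j = some c
  · exact card_le_card fun j => by simpa using fun hjs hj => ⟨hjs, hstay j hjs hj⟩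
  push Not at hstay
  obtain ⟨j, hjs, hj, hj'⟩ := hstay
  obtain ⟨hfull, habove⟩ := hS.full_of_displaced (hμ.2 j c hj) hj hj'
  calc #{j | j ∈ s ∧ μ j = some c}
      ≤ matchCount μ c := card_le_card fun k => by simp +contextual
    _ ≤ r c := hμ.1 c
    _ ≤ matchCount μ' c := hfull
    _ ≤ #{j | j ∈ s ∧ μ' j = some c} := card_le_card fun k => by
      simpa using fun hk => ⟨hs j hjs k (habove k hk), hk⟩

end Stable

theorem daim_preserves_maxInMax_general (r : κ → ℕ) (πr : κ → ι → ℕ) (η β : κ → ℕ)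
    (prec : κ → ℕ)
    (μ μ' : ι → Option κ)
    (hμ : MaxInMax r (Elig πr η) (Benef πr β) μ)
    (hout : DAIMOutput r πr η prec μ μ') :
    MaxInMax r (Elig πr η) (Benef πr β) μ' ∧
    ∀ c, (Finset.univ.filter fun j => j ∈ Benef πr β c ∧ μ j = some c).card ≤
      (Finset.univ.filter fun j => j ∈ Benef πr β c ∧ μ' j = some c).card := by
  have hS := hout.1
  have hvalid : Valid r (Elig πr η) μ := hμ.1.1
  have hbenef (c : κ) : #{j | j ∈ Benef πr β c ∧ μ j = some c} ≤
      #{j | j ∈ Benef πr β c ∧ μ' j = some c} :=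
    hS.card_filter_le hvalid fun j hj k hk => by
      simp only [Benef, mem_filter, mem_univ, true_and] at hj ⊢
      omega
  have hcount (c : κ) : matchCount μ c ≤ matchCount μ' c := by
    simpa [matchCount] using hS.card_filter_le hvalid (c := c) (s := univ) (by simp)
  refine ⟨hμ.of_le ⟨hS.1, hS.2.1⟩ ?_ ?_, hbenef⟩
  · simpa only [matchedCard_eq_sum] using sum_le_sum fun c _ => hcount c
  · simpa only [benefCard_eq_sum] using sum_le_sum fun c _ => hbenef c

/-- Preservation of max-in-max under DAIM: if the initial matching is max-in-max (and
eligibility-complying), so is the DAIM output; in particular, in every category the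
number of beneficiaries of that category matched to it does not decrease. -/
theorem daim_preserves_maxInMax (r : κ → ℕ) (πr : κ → ι → ℕ) (η β : κ → ℕ)
    (hβη : ∀ c, β c ≤ η c) (prec : κ → ℕ)
    (hprec : Function.Injective prec) (hπ : ∀ c, Function.Injective (πr c))
    (μ μ' : ι → Option κ)
    (hμ : MaxInMax r (Elig πr η) (Benef πr β) μ)
    (hout : DAIMOutput r πr η prec μ μ') :
    MaxInMax r (Elig πr η) (Benef πr β) μ' ∧
    ∀ c, (Finset.univ.filter fun j => j ∈ Benef πr β c ∧ μ j = some c).card ≤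
      (Finset.univ.filter fun j => j ∈ Benef πr β c ∧ μ' j = some c).card :=
  daim_preserves_maxInMax_general r πr η β prec μ μ' hμ hout
end
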